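/- Lower bound on ASAp sampling probabilities: let w_{1:n} ∈ L with Q(w_{1:n}) > 0. For any finite sample set S ⊆ L and any position j ≤ n, the ASAp conditional satisfies Q̃_S(w_j | w_{1:j-1}) ≥ P(w_j | w_{1:j-1}) · c(w_{1:j}), a positive constant independent of S. Consequently Q̃_S(w_{1:n}) ≥ ∏_{j=1}^n P(w_j | w_{1:j-1}) · c(w_{1:j}) > 0. -/

import Mathlib

open scoped BigOperators
open Finset Filter

namespace GAD

/-- Marginal probability of the prefix `u` under a distribution `P` on length-`n` strings. -/
noncomputable def marg {α : Type*} [Fintype α] (n : ℕ) (P : List α → ℝ) (u : List α) : ℝ :=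
  ∑ v : Fin (n - u.length) → α, P (u ++ List.ofFn v)

/-- Marginal probability mass of completions of `u` that land in the language `L`. -/
noncomputable def margL {α : Type*} [Fintype α] (n : ℕ) (P : List α → ℝ) (L : Set (List α))
    (u : List α) : ℝ :=
  ∑ v : Fin (n - u.length) → α, L.indicator P (u ++ List.ofFn v)

/-- Next-token conditional `P(a | u)`. -/
noncomputable def cond {α : Type*} [Fintype α] (n : ℕ) (P : List α → ℝ) (u : List α) (a : α) : ℝ :=
  marg n P (u ++ [a]) / marg n P u

/-- Expected future grammaticality `c(u) = Σ_v P(v | u) · 1[u ++ v ∈ L]`. -/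
noncomputable def efg {α : Type*} [Fintype α] (n : ℕ) (P : List α → ℝ) (L : Set (List α))
    (u : List α) : ℝ :=
  margL n P L u / marg n P u

/-- `u` is a prefix of some string of the language `L`. -/
def inPrefix {α : Type*} (L : Set (List α)) (u : List α) : Prop := ∃ v, u ++ v ∈ L

/-- Total probability mass of the language: `P(L)`. -/
noncomputable def PL {α : Type*} [Fintype α] (n : ℕ) (P : List α → ℝ) (L : Set (List α)) : ℝ :=
  margL n P L []

open Classical in
/-- ASAp approximation of expected future grammaticality, with fuel = remaining length. -/
noncomputable def ctildeAux {α : Type*} [Fintype α] (n : ℕ) (P : List α → ℝ) (L : Set (List α))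
    (S : Finset (List α)) : ℕ → List α → ℝ
  | 0, u => Set.indicator L (fun _ => (1 : ℝ)) u
  | (k + 1), u =>
      if ∃ s ∈ S, u <+: s then
        ∑ a : α, cond n P u a * ctildeAux n P L S k (u ++ [a])
      else Set.indicator {t | inPrefix L t} (fun _ => (1 : ℝ)) u

/-- ASAp overapproximation `c̃_S`. -/
noncomputable def ctilde {α : Type*} [Fintype α] (n : ℕ) (P : List α → ℝ) (L : Set (List α))
    (S : Finset (List α)) (u : List α) : ℝ :=
  ctildeAux n P L S (n - u.length) u

/-- The ASAp sampling distribution `Q̃_S`, as a product of reweighted left-to-right conditionals. -/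
noncomputable def QtildeS {α : Type*} [Fintype α] (n : ℕ) (P : List α → ℝ) (L : Set (List α))
    (S : Finset (List α)) (w : Fin n → α) : ℝ :=
  ∏ i : Fin n,
    cond n P ((List.ofFn w).take i) (w i) * ctilde n P L S ((List.ofFn w).take i ++ [w i]) /
      ∑ a : α, cond n P ((List.ofFn w).take i) a * ctilde n P L S ((List.ofFn w).take i ++ [a])

/-!
The expected future grammaticality satisfies the one-step recursion `c(u) = ∑ₐ P(a | u) c(ua)`,
and `c̃_S` follows the same recursion on prefixes of samples while elsewhere it is the indicator of
being a prefix of `L`, which dominates `c`; so induction on the remaining length gives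
`c ≤ c̃_S ≤ 1`. The normaliser `∑ₐ P(a | u) c̃_S(ua)` is then at most `1`, so the reweighted
conditional is at least its numerator `P(w_j | u) c̃_S(u w_j) ≥ P(w_j | u) c(u w_j)`.
Positivity holds because `w ∈ L` is itself one of the completions counted by `c(w_{1:j})`.
-/

theorem le_div_of_le_of_le_one {K : Type*} [Field K] [LinearOrder K] [IsStrictOrderedRing K]
    {x y d : K} (hxy : x ≤ y) (hy : 0 ≤ y) (hyd : y ≤ d) (hd : d ≤ 1) :
    x ≤ y / d := by
  rcases (hy.trans hyd).eq_or_lt with hd0 | hd0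
  · obtain rfl : y = 0 := le_antisymm (hd0 ▸ hyd) hy
    simpa [← hd0] using hxy
  · exact hxy.trans (le_div_self hy hd0 hd)

section Development

variable {α : Type*} [Fintype α] {n : ℕ} {P : List α → ℝ} {L : Set (List α)}

theorem sum_pi_fin_succ {M : Type*} [AddCommMonoid M] {m : ℕ} (f : (Fin (m + 1) → α) → M) :
    ∑ v : Fin (m + 1) → α, f v = ∑ a : α, ∑ v : Fin m → α, f (Fin.cons a v) := by
  rw [← (Fin.consEquiv fun _ ↦ α).sum_comp f, Fintype.sum_prod_type]
  rfl

theorem marg_of_length_eq {u : List α} (hu : u.length = n) : marg n P u = P u := by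
  rw [marg, hu, Nat.sub_self, Fintype.sum_unique]
  simp

theorem marg_eq_sum {u : List α} (hu : u.length < n) :
    marg n P u = ∑ a : α, marg n P (u ++ [a]) := by
  rw [marg, show n - u.length = n - (u.length + 1) + 1 by omega, sum_pi_fin_succ]
  refine Finset.sum_congr rfl fun a _ ↦ ?_
  rw [marg, List.length_append, List.length_singleton]
  simp [List.ofFn_succ]

theorem margL_eq_sum {u : List α} (hu : u.length < n) :
    margL n P L u = ∑ a : α, margL n P L (u ++ [a]) :=
  marg_eq_sum hu

theorem marg_nonneg (hP : ∀ w, 0 ≤ P w) (u : List α) : 0 ≤ marg n P u :=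
  Finset.sum_nonneg fun _ _ ↦ hP _

theorem margL_nonneg (hP : ∀ w, 0 ≤ P w) (u : List α) : 0 ≤ margL n P L u :=
  Finset.sum_nonneg fun _ _ ↦ Set.indicator_nonneg (fun w _ ↦ hP w) _

theorem margL_le_marg (hP : ∀ w, 0 ≤ P w) (u : List α) : margL n P L u ≤ marg n P u :=
  Finset.sum_le_sum fun _ _ ↦ Set.indicator_le_self' (fun w _ ↦ hP w) _

theorem cond_nonneg (hP : ∀ w, 0 ≤ P w) (u : List α) (a : α) : 0 ≤ cond n P u a :=
  div_nonneg (marg_nonneg hP _) (marg_nonneg hP _)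

theorem efg_le_one (hP : ∀ w, 0 ≤ P w) (u : List α) : efg n P L u ≤ 1 :=
  div_le_one_of_le₀ (margL_le_marg hP u) (marg_nonneg hP u)

theorem sum_cond_le_one {u : List α} (hu : u.length < n) : ∑ a : α, cond n P u a ≤ 1 := by
  simp only [cond, ← Finset.sum_div, ← marg_eq_sum hu, div_self_le_one]

theorem cond_mul_efg_append (hP : ∀ w, 0 ≤ P w) (u : List α) (a : α) :
    cond n P u a * efg n P L (u ++ [a]) = margL n P L (u ++ [a]) / marg n P u := by
  by_cases h : marg n P (u ++ [a]) = 0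
  · have hL : margL n P L (u ++ [a]) = 0 :=
      le_antisymm (h ▸ margL_le_marg hP _) (margL_nonneg hP _)
    simp [cond, efg, h, hL]
  · rw [cond, efg, div_mul_div_comm, mul_comm (marg n P u), mul_div_mul_left _ _ h]

theorem efg_eq_sum_cond_mul_efg (hP : ∀ w, 0 ≤ P w) {u : List α} (hu : u.length < n) :
    efg n P L u = ∑ a : α, cond n P u a * efg n P L (u ++ [a]) := by
  rw [Finset.sum_congr rfl fun a _ ↦ cond_mul_efg_append hP u a, ← Finset.sum_div,
    ← margL_eq_sum hu, efg]

theorem efg_eq_zero_of_not_inPrefix {u : List α} (hu : ¬inPrefix L u) : efg n P L u = 0 := by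
  have hL : margL n P L u = 0 :=
    Finset.sum_eq_zero fun v _ ↦ Set.indicator_of_notMem (fun hv ↦ hu ⟨_, hv⟩) _
  rw [efg, hL, zero_div]

theorem efg_le_indicator_of_length_eq {u : List α} (hu : u.length = n) :
    efg n P L u ≤ L.indicator (fun _ ↦ (1 : ℝ)) u := by
  have hL : margL n P L u = L.indicator P u := marg_of_length_eq hu
  rw [efg, hL, marg_of_length_eq hu]
  by_cases huL : u ∈ L
  · simp only [Set.indicator_of_mem huL, div_self_le_one]
  · simp [Set.indicator_of_notMem huL]

variable {S : Finset (List α)}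

theorem ctildeAux_nonneg (hP : ∀ w, 0 ≤ P w) (k : ℕ) (u : List α) :
    0 ≤ ctildeAux n P L S k u := by
  induction k generalizing u with
  | zero => exact Set.indicator_nonneg (fun _ _ ↦ zero_le_one) u
  | succ k ih =>
    rw [ctildeAux]
    split_ifs
    · exact Finset.sum_nonneg fun a _ ↦ mul_nonneg (cond_nonneg hP u a) (ih _)
    · exact Set.indicator_nonneg (fun _ _ ↦ zero_le_one) u

theorem ctildeAux_le_one (hP : ∀ w, 0 ≤ P w) (k : ℕ) {u : List α} (hu : u.length + k = n) :
    ctildeAux n P L S k u ≤ 1 := by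
  induction k generalizing u with
  | zero => exact Set.indicator_le_self' (fun _ _ ↦ zero_le_one) u
  | succ k ih =>
    rw [ctildeAux]
    split_ifs
    · calc ∑ a : α, cond n P u a * ctildeAux n P L S k (u ++ [a])
          ≤ ∑ a : α, cond n P u a :=
            Finset.sum_le_sum fun a _ ↦ mul_le_of_le_one_right (cond_nonneg hP u a)
              (ih (by simp; omega))
        _ ≤ 1 := sum_cond_le_one (by omega)
    · exact Set.indicator_le_self' (fun _ _ ↦ zero_le_one) u

theorem efg_le_ctildeAux (hP : ∀ w, 0 ≤ P w) (k : ℕ) {u : List α} (hu : u.length + k = n) :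
    efg n P L u ≤ ctildeAux n P L S k u := by
  induction k generalizing u with
  | zero => exact efg_le_indicator_of_length_eq hu
  | succ k ih =>
    rw [ctildeAux]
    split_ifs
    · rw [efg_eq_sum_cond_mul_efg hP (by omega)]
      exact Finset.sum_le_sum fun a _ ↦
        mul_le_mul_of_nonneg_left (ih (by simp; omega)) (cond_nonneg hP u a)
    · by_cases hpre : inPrefix L u
      · rw [Set.indicator_of_mem (show u ∈ {t | inPrefix L t} from hpre)]
        exact efg_le_one hP u
      · rw [efg_eq_zero_of_not_inPrefix hpre]
        exact Set.indicator_nonneg (fun _ _ ↦ zero_le_one) u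

theorem ctilde_nonneg (hP : ∀ w, 0 ≤ P w) (u : List α) : 0 ≤ ctilde n P L S u :=
  ctildeAux_nonneg hP _ u

theorem ctilde_le_one (hP : ∀ w, 0 ≤ P w) {u : List α} (hu : u.length ≤ n) :
    ctilde n P L S u ≤ 1 :=
  ctildeAux_le_one hP _ (by omega)

theorem efg_le_ctilde (hP : ∀ w, 0 ≤ P w) {u : List α} (hu : u.length ≤ n) :
    efg n P L u ≤ ctilde n P L S u :=
  efg_le_ctildeAux hP _ (by omega)

theorem indicator_le_margL_of_prefix (hP : ∀ w, 0 ≤ P w) {u w : List α} (huw : u <+: w)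
    (hw : w.length = n) : L.indicator P w ≤ margL n P L u := by
  obtain ⟨t, rfl⟩ := huw
  have ht : t.length = n - u.length := by simp at hw; omega
  obtain ⟨v, rfl⟩ : ∃ v : Fin (n - u.length) → α, List.ofFn v = t :=
    ht ▸ ⟨t.get, List.ofFn_get t⟩
  exact Finset.single_le_sum (f := fun v ↦ L.indicator P (u ++ List.ofFn v))
    (fun _ _ ↦ Set.indicator_nonneg (fun w _ ↦ hP w) _) (Finset.mem_univ v)

theorem efg_pos_of_prefix (hP : ∀ w, 0 ≤ P w) {u w : List α} (huw : u <+: w)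
    (hw : w.length = n) (hwL : w ∈ L) (hPw : 0 < P w) (hu : 0 < marg n P u) :
    0 < efg n P L u :=
  div_pos ((Set.indicator_of_mem hwL P ▸ hPw).trans_le (indicator_le_margL_of_prefix hP huw hw)) hu

variable (n P L S) in
noncomputable def asapCond (u : List α) (a : α) : ℝ :=
  cond n P u a * ctilde n P L S (u ++ [a]) / ∑ b : α, cond n P u b * ctilde n P L S (u ++ [b])

theorem cond_mul_efg_le_asapCond (hP : ∀ w, 0 ≤ P w) {u : List α} (hu : u.length < n) (a : α) :
    cond n P u a * efg n P L (u ++ [a]) ≤ asapCond n P L S u a := by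
  have hlen (b : α) : (u ++ [b]).length ≤ n := by simp; omega
  apply le_div_of_le_of_le_one
  · exact mul_le_mul_of_nonneg_left (efg_le_ctilde hP (hlen a)) (cond_nonneg hP u a)
  · exact mul_nonneg (cond_nonneg hP u a) (ctilde_nonneg hP _)
  · exact Finset.single_le_sum (f := fun b ↦ cond n P u b * ctilde n P L S (u ++ [b]))
      (fun b _ ↦ mul_nonneg (cond_nonneg hP u b) (ctilde_nonneg hP _)) (Finset.mem_univ a)
  · calc ∑ b : α, cond n P u b * ctilde n P L S (u ++ [b])
        ≤ ∑ b : α, cond n P u b :=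
          Finset.sum_le_sum fun b _ ↦
            mul_le_of_le_one_right (cond_nonneg hP u b) (ctilde_le_one hP (hlen b))
      _ ≤ 1 := sum_cond_le_one hu

end Development

theorem stmt13_general {α : Type*} [Fintype α] (n : ℕ) (P : List α → ℝ) (L : Set (List α))
    (hP : ∀ w, 0 ≤ P w)
    (hmarg : ∀ u : List α, u.length ≤ n → 0 < marg n P u)
    (S : Finset (List α))
    (w : Fin n → α) (hwL : List.ofFn w ∈ L) :
    (∀ j : Fin n,
        cond n P ((List.ofFn w).take j) (w j) * efg n P L ((List.ofFn w).take j ++ [w j]) ≤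
          cond n P ((List.ofFn w).take j) (w j) *
              ctilde n P L S ((List.ofFn w).take j ++ [w j]) /
            ∑ a : α, cond n P ((List.ofFn w).take j) a *
              ctilde n P L S ((List.ofFn w).take j ++ [a])) ∧
    (∏ j : Fin n,
        cond n P ((List.ofFn w).take j) (w j) * efg n P L ((List.ofFn w).take j ++ [w j]))
      ≤ QtildeS n P L S w ∧
    0 < ∏ j : Fin n,
        cond n P ((List.ofFn w).take j) (w j) * efg n P L ((List.ofFn w).take j ++ [w j]) := by
  have hstep (j : Fin n) := cond_mul_efg_le_asapCond (n := n) (P := P) (L := L) (S := S) hP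
    (u := (List.ofFn w).take j) (by simp) (w j)
  have hPw : 0 < P (List.ofFn w) := by
    simpa [marg_of_length_eq] using hmarg (List.ofFn w) (by simp)
  have hpos (j : Fin n) :
      0 < cond n P ((List.ofFn w).take j) (w j) * efg n P L ((List.ofFn w).take j ++ [w j]) := by
    have hpre : (List.ofFn w).take j ++ [w j] <+: List.ofFn w := by
      simpa [List.take_add_one] using List.take_prefix (j + 1) (List.ofFn w)
    have hlen : ((List.ofFn w).take j ++ [w j]).length ≤ n := hpre.length_le.trans (by simp)
    exact mul_pos (div_pos (hmarg _ hlen) (hmarg _ (by simp)))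
      (efg_pos_of_prefix hP hpre (by simp) hwL hPw (hmarg _ hlen))
  exact ⟨hstep, Finset.prod_le_prod (fun j _ ↦ (hpos j).le) fun j _ ↦ hstep j,
    Finset.prod_pos fun j _ ↦ hpos j⟩

/-- Lower bound on ASAp sampling probabilities: for `w ∈ L` with `Q(w) > 0`
and any finite `S ⊆ L`, each ASAp conditional is at least `P(w_j | w_{1:j-1})·c(w_{1:j})`
(a positive constant independent of `S`), hence `Q̃_S(w) ≥ ∏_j P(w_j | w_{1:j-1})·c(w_{1:j}) > 0`. -/
theorem stmt13 {α : Type*} [Fintype α] (n : ℕ) (P : List α → ℝ) (L : Set (List α))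
    (hP : ∀ w, 0 ≤ P w) (hL : ∀ w ∈ L, w.length = n)
    (hmarg : ∀ u : List α, u.length ≤ n → 0 < marg n P u)
    (S : Finset (List α)) (hS : ↑S ⊆ L)
    (w : Fin n → α) (hwL : List.ofFn w ∈ L)
    (hQ : 0 < L.indicator P (List.ofFn w) / PL n P L) :
    (∀ j : Fin n,
        cond n P ((List.ofFn w).take j) (w j) * efg n P L ((List.ofFn w).take j ++ [w j]) ≤
          cond n P ((List.ofFn w).take j) (w j) *
              ctilde n P L S ((List.ofFn w).take j ++ [w j]) /
            ∑ a : α, cond n P ((List.ofFn w).take j) a *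
              ctilde n P L S ((List.ofFn w).take j ++ [a])) ∧
    (∏ j : Fin n,
        cond n P ((List.ofFn w).take j) (w j) * efg n P L ((List.ofFn w).take j ++ [w j]))
      ≤ QtildeS n P L S w ∧
    0 < ∏ j : Fin n,
        cond n P ((List.ofFn w).take j) (w j) * efg n P L ((List.ofFn w).take j ++ [w j]) :=
  stmt13_general n P L hP hmarg S w hwL

end GAD
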